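/- arXiv:0908.2642 — 4 statements merged into one kernel-verified Lean document; each statement's English description precedes it below -/
import Mathlib

section
/- (Gowers–Cauchy–Schwarz inequality) Let G be a finite abelian group, d ≥ 1, and for each ω ∈ {0,1}^d let φ_ω : G → ℂ be a function. Then |E_{x,h_1,…,h_d ∈ G} ∏_{ω ∈ {0,1}^d} φ_ω(x + ω_1 h_1 + ⋯ + ω_d h_d)| ≤ ∏_{ω ∈ {0,1}^d} ‖φ_ω‖_{U^d(G)}. -/
open Finset

/-- The average of a complex-valued function over a finite type. -/
noncomputable def avgC {X : Type*} [Fintype X] (φ : X → ℂ) : ℂ :=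
  (∑ x, φ x) / (Fintype.card X : ℂ)

/-- The Gowers `U^d` norm of `φ : G → ℂ` on a finite abelian group `G`:
`‖φ‖_{U^d(G)} = (E_{x,h_1,…,h_d} ∏_{ω ∈ {0,1}^d} C^{|ω|} φ(x + ω·h))^{1/2^d}`,
where `C` is complex conjugation and `|ω| = ω_1 + ⋯ + ω_d`. -/
noncomputable def gowersNorm {G : Type*} [AddCommGroup G] [Fintype G]
    (d : ℕ) (φ : G → ℂ) : ℝ :=
  ‖
    ((∑ x : G, ∑ h : Fin d → G, ∏ ω : Fin d → Bool,
        (fun z : ℂ => (starRingEnd ℂ) z)^[∑ i, if ω i then 1 else 0]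
          (φ (x + ∑ i, if ω i then h i else 0)))
      / ((Fintype.card G : ℂ) ^ (d + 1)))‖ ^ ((1 : ℝ) / 2 ^ d)

/-!
Split the cube `{0,1}^d` along a coordinate `i`. The sum defining the Gowers inner product
becomes `∑_{h'} A₀(h') · conj (A₁(h'))`, where `A_b` only involves the functions on the face
`ω i = b`, and making the family constant along `i` (copying the face `b` onto the other
one) turns the sum into `∑_{h'} |A_b(h')|²`. Cauchy–Schwarz therefore bounds `|⟨f⟩|²` by the
product of the inner products of the two families made constant along `i`. Doing this in every
coordinate in turn makes the family constant, so `|⟨f⟩|^{2^d} ≤ ∏_η ⟨f_η, …, f_η⟩`. The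
conjugations `C^{|ω|}` of the theorem are harmless because conjugating a function conjugates its
Gowers inner product.
-/

open Function ComplexConjugate

lemma norm_sum_mul_conj_sq_le {κ : Type*} (s : Finset κ) (a b : κ → ℂ) :
    ‖∑ k ∈ s, a k * conj (b k)‖ ^ 2 ≤ (∑ k ∈ s, ‖a k‖ ^ 2) * ∑ k ∈ s, ‖b k‖ ^ 2 :=
  calc ‖∑ k ∈ s, a k * conj (b k)‖ ^ 2 ≤ (∑ k ∈ s, ‖a k‖ * ‖b k‖) ^ 2 := by
        gcongr
        exact (norm_sum_le _ _).trans_eq (by simp)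
    _ ≤ _ := sum_mul_sq_le_sq_mul_sq s _ _

lemma involutive_conj : Involutive (conj : ℂ → ℂ) := Complex.conj_conj

lemma conj_iterate_conj_iterate (n : ℕ) (z : ℂ) : conj^[n] (conj^[n] z) = z := by
  rw [← iterate_add_apply, ← two_mul, involutive_conj.iterate_two_mul, id]

lemma div_le_prod_div_rpow_inv_card {κ : Type*} [Fintype κ] [Nonempty κ] {a N : ℝ}
    {b : κ → ℝ} (ha : 0 ≤ a) (hb : ∀ k, 0 ≤ b k) (hN : 0 ≤ N) (h : a ^ Fintype.card κ ≤ ∏ k, b k) :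
    a / N ≤ ∏ k, (b k / N) ^ (Fintype.card κ : ℝ)⁻¹ := by
  have hpow : (a / N) ^ Fintype.card κ ≤ ∏ k, b k / N := by
    rw [div_pow, prod_div_distrib, prod_const, card_univ]
    exact div_le_div_of_nonneg_right h (pow_nonneg hN _)
  rw [Real.finsetProd_rpow _ _ fun k _ => div_nonneg (hb k) hN]
  calc a / N = ((a / N) ^ Fintype.card κ) ^ (Fintype.card κ : ℝ)⁻¹ :=
        (Real.pow_rpow_inv_natCast (div_nonneg ha hN) Fintype.card_ne_zero).symm
    _ ≤ _ := Real.rpow_le_rpow (by positivity) hpow (by positivity)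

lemma Finset.piecewise_update_of_notMem {ι β : Type*} [DecidableEq ι] {s : Finset ι} {i : ι}
    (hi : i ∉ s) (η ω : ι → β) (b : β) :
    s.piecewise η (update ω i b) = (insert i s).piecewise (update η i b) ω := by
  ext j
  rcases eq_or_ne j i with rfl | hj <;> simp [Finset.piecewise, *]

section SplitAt

variable {ι : Type*} [DecidableEq ι] (i : ι)

lemma update_funSplitAt_symm (b c : Bool) (ν : {j // j ≠ i} → Bool) :
    update ((Equiv.funSplitAt i Bool).symm (b, ν)) i c =
      (Equiv.funSplitAt i Bool).symm (c, ν) := by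
  ext j
  rcases eq_or_ne j i with rfl | hj <;> simp [update, *]

variable [Fintype ι]

lemma prod_eq_prod_funSplitAt_false_mul {M : Type*} [CommMonoid M] (F : (ι → Bool) → M) :
    ∏ ω, F ω = (∏ ν, F ((Equiv.funSplitAt i Bool).symm (false, ν))) *
      ∏ ν, F ((Equiv.funSplitAt i Bool).symm (true, ν)) := by
  rw [← (Equiv.funSplitAt i Bool).symm.prod_comp, Fintype.prod_prod_type, Fintype.prod_bool,
    mul_comm]

lemma prod_update_false_mul_prod_update_true {M : Type*} [CommMonoid M] (F : (ι → Bool) → M) :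
    (∏ η, F (update η i false)) * ∏ η, F (update η i true) = (∏ η, F η) ^ 2 := by
  rw [prod_eq_prod_funSplitAt_false_mul i fun η => F (update η i false),
    prod_eq_prod_funSplitAt_false_mul i fun η => F (update η i true),
    prod_eq_prod_funSplitAt_false_mul i F]
  simp only [update_funSplitAt_symm]
  rw [mul_pow, sq, sq]

end SplitAt

namespace Gowers

def cubeWeight {ι : Type*} [Fintype ι] (ω : ι → Bool) : ℕ := ∑ i, if ω i then 1 else 0

def cubePoint {ι G : Type*} [Fintype ι] [AddCommMonoid G] (ω : ι → Bool) (h : ι → G) : G :=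
  ∑ i, if ω i then h i else 0

/-- `|G|^{card ι + 1}` times the Gowers inner product of the family `f`. -/
noncomputable def gowersInner {ι G : Type*} [Fintype ι] [DecidableEq ι] [AddCommMonoid G]
    [Fintype G] (f : (ι → Bool) → G → ℂ) : ℂ :=
  ∑ x, ∑ h : ι → G, ∏ ω, conj^[cubeWeight ω] (f ω (x + cubePoint ω h))

/-- The sum `A_b(h)` of the header: the cube with coordinate `i` removed, carrying the functions
of the face `ω i = b`. -/
noncomputable def faceSum {ι G : Type*} [Fintype ι] [DecidableEq ι] [AddCommMonoid G]
    [Fintype G] (f : (ι → Bool) → G → ℂ) (i : ι) (b : Bool) (h : {j // j ≠ i} → G) : ℂ :=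
  ∑ x, ∏ ν : {j // j ≠ i} → Bool,
    conj^[cubeWeight ν] (f ((Equiv.funSplitAt i Bool).symm (b, ν)) (x + cubePoint ν h))

section SplitAt

variable {ι : Type*} [Fintype ι] [DecidableEq ι] (i : ι)

lemma cubeWeight_funSplitAt_symm (b : Bool) (ν : {j // j ≠ i} → Bool) :
    cubeWeight ((Equiv.funSplitAt i Bool).symm (b, ν)) =
      (if b then 1 else 0) + cubeWeight ν := by
  rw [cubeWeight, Fintype.sum_eq_add_sum_subtype_ne _ i]
  congr 1
  · simp
  · exact Finset.sum_congr rfl fun j _ => by simp [j.2]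

lemma cubePoint_funSplitAt_symm {G : Type*} [AddCommMonoid G] (b : Bool)
    (ν : {j // j ≠ i} → Bool) (t : G) (h : {j // j ≠ i} → G) :
    cubePoint ((Equiv.funSplitAt i Bool).symm (b, ν)) ((Equiv.funSplitAt i G).symm (t, h)) =
      (if b then t else 0) + cubePoint ν h := by
  rw [cubePoint, Fintype.sum_eq_add_sum_subtype_ne _ i]
  congr 1
  · simp
  · exact Finset.sum_congr rfl fun j _ => by simp [j.2]

end SplitAt

variable {ι G : Type*} [Fintype ι] [DecidableEq ι] [Fintype G]

section AddCommMonoid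

variable [AddCommMonoid G]

lemma faceSum_update (f : (ι → Bool) → G → ℂ) (i : ι) (b c : Bool) :
    faceSum (fun ω => f (update ω i c)) i b = faceSum f i c := by
  ext h
  simp only [faceSum, update_funSplitAt_symm]

lemma gowersInner_conj (f : (ι → Bool) → G → ℂ) :
    gowersInner (fun ω x => conj (f ω x)) = conj (gowersInner f) := by
  simp only [gowersInner, map_sum, map_prod, ← iterate_succ_apply, iterate_succ_apply']

lemma norm_gowersInner_conj_iterate (f : (ι → Bool) → G → ℂ) (n : ℕ) :
    ‖gowersInner (fun ω x => conj^[n] (f ω x))‖ = ‖gowersInner f‖ := by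
  rcases n.even_or_odd with hn | hn
  · simp only [involutive_conj.iterate_even hn, id]
  · rw [involutive_conj.iterate_odd hn, gowersInner_conj, Complex.norm_conj]

end AddCommMonoid

variable [AddCommGroup G]

lemma gowersInner_eq_sum_faceSum_mul_conj (f : (ι → Bool) → G → ℂ) (i : ι) :
    gowersInner f = ∑ h, faceSum f i false h * conj (faceSum f i true h) := by
  set F : Bool → G → ({j // j ≠ i} → G) → ℂ := fun b x h => ∏ ν, conj^[cubeWeight ν]
      (f ((Equiv.funSplitAt i Bool).symm (b, ν)) (x + cubePoint ν h))
  have hprod : ∀ x t h, ∏ ω, conj^[cubeWeight ω]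
      (f ω (x + cubePoint ω ((Equiv.funSplitAt i G).symm (t, h)))) =
        F false x h * conj (F true (x + t) h) := by
    intro x t h
    rw [prod_eq_prod_funSplitAt_false_mul i, map_prod]
    congr 1 <;> refine prod_congr rfl fun ν _ => ?_
    · simp [cubeWeight_funSplitAt_symm, cubePoint_funSplitAt_symm]
    · rw [cubeWeight_funSplitAt_symm, cubePoint_funSplitAt_symm, if_pos rfl, if_pos rfl,
        iterate_add_apply, add_assoc]
      rfl
  calc gowersInner f = ∑ x, ∑ t, ∑ h, F false x h * conj (F true (x + t) h) := by
        refine sum_congr rfl fun x _ => ?_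
        rw [← (Equiv.funSplitAt i G).symm.sum_comp, Fintype.sum_prod_type]
        simp only [hprod]
    _ = ∑ x, ∑ h, ∑ y, F false x h * conj (F true y h) := by
        refine sum_congr rfl fun x _ => ?_
        rw [sum_comm]
        exact sum_congr rfl fun h _ =>
          Equiv.sum_comp (Equiv.addLeft x) fun y => F false x h * conj (F true y h)
    _ = _ := by
        rw [sum_comm]
        simp_rw [faceSum, map_sum, sum_mul_sum]
        rfl

lemma gowersInner_update (f : (ι → Bool) → G → ℂ) (i : ι) (c : Bool) :
    gowersInner (fun ω => f (update ω i c)) = ((∑ h, ‖faceSum f i c h‖ ^ 2 : ℝ) : ℂ) := by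
  rw [gowersInner_eq_sum_faceSum_mul_conj, faceSum_update, faceSum_update]
  push_cast
  exact sum_congr rfl fun h _ => Complex.mul_conj' _

lemma norm_gowersInner_sq_le (f : (ι → Bool) → G → ℂ) (i : ι) :
    ‖gowersInner f‖ ^ 2 ≤ ‖gowersInner (fun ω => f (update ω i false))‖ *
      ‖gowersInner (fun ω => f (update ω i true))‖ := by
  rw [gowersInner_update, gowersInner_update, Complex.norm_of_nonneg (by positivity),
    Complex.norm_of_nonneg (by positivity), gowersInner_eq_sum_faceSum_mul_conj f i]
  exact norm_sum_mul_conj_sq_le _ _ _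

/-- The product runs over all `η`, so each restriction of `η` to `s` occurs
`2 ^ (card ι - card s)` times; these multiplicities absorb the exponents of the iteration. -/
lemma norm_gowersInner_pow_le_prod_piecewise (f : (ι → Bool) → G → ℂ) (s : Finset ι) :
    ‖gowersInner f‖ ^ 2 ^ Fintype.card ι ≤
      ∏ η, ‖gowersInner fun ω => f (s.piecewise η ω)‖ := by
  induction s using Finset.induction_on with
  | empty => simp
  | insert i s hi ih =>
    refine ih.trans (le_of_pow_le_pow_left₀ two_ne_zero (by positivity) ?_)
    calc (∏ η, ‖gowersInner fun ω => f (s.piecewise η ω)‖) ^ 2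
        = ∏ η, ‖gowersInner fun ω => f (s.piecewise η ω)‖ ^ 2 := (prod_pow ..).symm
      _ ≤ ∏ η, ‖gowersInner fun ω => f ((insert i s).piecewise (update η i false) ω)‖ *
            ‖gowersInner fun ω => f ((insert i s).piecewise (update η i true) ω)‖ := by
          refine prod_le_prod (fun _ _ => by positivity) fun η _ => ?_
          simpa only [piecewise_update_of_notMem hi] using
            norm_gowersInner_sq_le (fun ω => f (s.piecewise η ω)) i
      _ = (∏ η, ‖gowersInner fun ω => f ((insert i s).piecewise η ω)‖) ^ 2 := by
          rw [prod_mul_distrib, prod_update_false_mul_prod_update_true i fun η =>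
            ‖gowersInner fun ω => f ((insert i s).piecewise η ω)‖]

lemma norm_gowersInner_pow_le_prod (f : (ι → Bool) → G → ℂ) :
    ‖gowersInner f‖ ^ 2 ^ Fintype.card ι ≤ ∏ η, ‖gowersInner fun _ : ι → Bool => f η‖ := by
  simpa using norm_gowersInner_pow_le_prod_piecewise f univ

lemma gowersNorm_eq_gowersInner (d : ℕ) (φ : G → ℂ) :
    gowersNorm d φ = (‖gowersInner fun _ : Fin d → Bool => φ‖ /
      ‖(Fintype.card G : ℂ) ^ (d + 1)‖) ^ ((1 : ℝ) / 2 ^ d) := by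
  rw [gowersNorm, norm_div]
  rfl

end Gowers

open Gowers

theorem gowers_cauchy_schwarz_general {G : Type} [AddCommGroup G] [Fintype G]
    (d : ℕ) (φ : (Fin d → Bool) → G → ℂ) :
    ‖((∑ x : G, ∑ h : Fin d → G, ∏ ω : Fin d → Bool,
        φ ω (x + ∑ i, if ω i then h i else 0)) / ((Fintype.card G : ℂ) ^ (d + 1)))‖ ≤
      ∏ ω : Fin d → Bool, gowersNorm d (φ ω) := by
  have hsum : (∑ x : G, ∑ h : Fin d → G, ∏ ω : Fin d → Bool,
      φ ω (x + ∑ i, if ω i then h i else 0)) =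
        gowersInner fun ω x => conj^[cubeWeight ω] (φ ω x) := by
    simp only [gowersInner, conj_iterate_conj_iterate]
    rfl
  have hpow : ‖gowersInner fun ω x => conj^[cubeWeight ω] (φ ω x)‖ ^
      Fintype.card (Fin d → Bool) ≤ ∏ η, ‖gowersInner fun _ : Fin d → Bool => φ η‖ := by
    simpa [norm_gowersInner_conj_iterate] using
      norm_gowersInner_pow_le_prod fun ω x => conj^[cubeWeight ω] (φ ω x)
  have hexp : (1 : ℝ) / 2 ^ d = (Fintype.card (Fin d → Bool) : ℝ)⁻¹ := by simp
  rw [hsum, norm_div]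
  simp only [gowersNorm_eq_gowersInner, hexp]
  exact div_le_prod_div_rpow_inv_card (norm_nonneg _) (fun _ => norm_nonneg _) (norm_nonneg _)
    hpow

/-- **Gowers–Cauchy–Schwarz inequality.** For a finite abelian group `G`, `d ≥ 1` and
functions `φ_ω : G → ℂ` indexed by `ω ∈ {0,1}^d`,
`|E_{x,h_1,…,h_d} ∏_ω φ_ω(x + ω·h)| ≤ ∏_ω ‖φ_ω‖_{U^d(G)}`. -/
theorem gowers_cauchy_schwarz {G : Type} [AddCommGroup G] [Fintype G]
    (d : ℕ) (hd : 1 ≤ d) (φ : (Fin d → Bool) → G → ℂ) :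
    ‖((∑ x : G, ∑ h : Fin d → G, ∏ ω : Fin d → Bool,
        φ ω (x + ∑ i, if ω i then h i else 0)) / ((Fintype.card G : ℂ) ^ (d + 1)))‖ ≤
      ∏ ω : Fin d → Bool, gowersNorm d (φ ω) :=
  gowers_cauchy_schwarz_general d φ
end

section
/- Let ‖·‖ be a quasi-algebra predual norm on ℝ^G with respect to a convex compact set F, with associated operator D and function C. If ψ ∈ ℝ^G satisfies ‖ψ‖_{BAC}^* ≤ 1, then for every m ≥ 1 the pointwise m-th power ψ^m satisfies ‖ψ^m‖^* ≤ C(m). -/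
open Finset

/-- The inner product `⟨f, g⟩ = E_{x ∈ G} f(x) g(x)` on real functions on a finite set. -/
noncomputable def inn {G : Type*} [Fintype G] (f g : G → ℝ) : ℝ :=
  (∑ x, f x * g x) / (Fintype.card G : ℝ)

/-- The dual norm of a norm-like functional `nn`:
`‖f‖^* = sup { |⟨f, g⟩| : nn g ≤ 1 }`. -/
noncomputable def dualNormOf {G : Type*} [Fintype G]
    (nn : (G → ℝ) → ℝ) (f : G → ℝ) : ℝ :=
  sSup {r : ℝ | ∃ g : G → ℝ, nn g ≤ 1 ∧ r = |inn f g|}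

/-- `nn` is a norm on the space `ℝ^G` of real functions on `G`. -/
def IsNormOn (G : Type*) [Fintype G] (nn : (G → ℝ) → ℝ) : Prop :=
  (∀ f, 0 ≤ nn f) ∧ (∀ f, nn f = 0 ↔ f = 0) ∧
  (∀ (a : ℝ) (f), nn (a • f) = |a| * nn f) ∧
  (∀ f g, nn (f + g) ≤ nn f + nn g)

/-- A norm `nn` on `ℝ^G` is a quasi-algebra predual norm with respect to a convex
compact set `F`, with functions `c : ℝ⁺ → ℝ⁺`, `C : ℤ⁺ → ℝ⁺` and operator `D`, if:
(1) `⟨f, Df⟩ ≤ 1` for `f ∈ F`; (2) `⟨f, Df⟩ ≥ c(ε)` for `f ∈ F` with `nn f ≥ ε`;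
(3) `‖Df_1 ⋯ Df_m‖^* ≤ C(m)` for `f_1, …, f_m ∈ F`; (4) `{Df : f ∈ F}` is compact and
spans `ℝ^G`. -/
structure IsQuasiAlgebraPredual (G : Type*) [Fintype G]
    (nn : (G → ℝ) → ℝ) (F : Set (G → ℝ)) (c : ℝ → ℝ) (C : ℕ → ℝ)
    (D : (G → ℝ) → (G → ℝ)) : Prop where
  isNorm : IsNormOn G nn
  convexF : Convex ℝ F
  compactF : IsCompact F
  inner_le_one : ∀ f ∈ F, inn f (D f) ≤ 1
  inner_ge : ∀ ε : ℝ, 0 < ε → ∀ f ∈ F, ε ≤ nn f → c ε ≤ inn f (D f)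
  dual_prod_le : ∀ m : ℕ, 1 ≤ m → ∀ fs : Fin m → (G → ℝ), (∀ i, fs i ∈ F) →
    dualNormOf nn (fun x => ∏ i, D (fs i) x) ≤ C m
  compactD : IsCompact (D '' F)
  spanD : Submodule.span ℝ (D '' F) = ⊤

/-- The basic anti-uniform correlation (BAC) norm:
`‖g‖_{BAC} = max { |⟨g, Df⟩| : f ∈ F }`. -/
noncomputable def bacNorm {G : Type*} [Fintype G]
    (F : Set (G → ℝ)) (D : (G → ℝ) → (G → ℝ)) (g : G → ℝ) : ℝ :=
  sSup {r : ℝ | ∃ f ∈ F, r = |inn g (D f)|}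

/-- The dual of the BAC norm. -/
noncomputable def bacDualNorm {G : Type*} [Fintype G]
    (F : Set (G → ℝ)) (D : (G → ℝ) → (G → ℝ)) (f : G → ℝ) : ℝ :=
  sSup {r : ℝ | ∃ g : G → ℝ, bacNorm F D g ≤ 1 ∧ r = |inn f g|}

/-! If `‖ψ‖_{BAC}^* ≤ 1`, then by the bipolar theorem `ψ` lies in the closed convex hull of
`±D(F)`. Expanding `ψ^m` multilinearly, every point of that hull has its `m`-th power in the
closed convex hull of the products `±Df₁ ⋯ Dfₘ`. By (3) these products lie in the closed,
convex, symmetric set `{a | |⟨a, g⟩| ≤ C(m) whenever ‖g‖ ≤ 1}`, hence so does `ψ^m`. -/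

theorem prod_mem_of_forall_mem_convexHull_union_neg {A : Type*} [CommRing A] [Algebra ℝ A]
    {S : Set A} {m : ℕ} {Q : Set A} (hQ : Convex ℝ Q) (hQneg : ∀ a ∈ Q, -a ∈ Q)
    (hS : ∀ fs : Fin m → A, (∀ i, fs i ∈ S) → ∏ i, fs i ∈ Q)
    (fs : Fin m → A) (hfs : ∀ i, fs i ∈ convexHull ℝ (S ∪ -S)) : ∏ i, fs i ∈ Q := by
  -- Fixing the first factor `a ∈ S ∪ -S` replaces `Q` by its preimage under `a * ·`, again
  -- convex and symmetric; convexity in the first factor then passes from `S ∪ -S` to its hull.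
  induction m generalizing Q with
  | zero => simpa using hS finZeroElim finZeroElim
  | succ m ih =>
    set t := ∏ i, fs (Fin.succ i)
    have hbase : ∀ a ∈ S ∪ -S, a * t ∈ Q := by
      intro a ha
      refine ih (Q := LinearMap.mulLeft ℝ a ⁻¹' Q) (hQ.linear_preimage _)
        (fun b hb => by simpa using hQneg _ hb) (fun gs hgs => ?_) _ fun i => hfs i.succ
      rcases ha with ha | ha
      · simpa [Fin.prod_cons] using hS (Fin.cons a gs) (Fin.cases ha hgs)
      · simpa [Fin.prod_cons] using hQneg _ (hS (Fin.cons (-a) gs) (Fin.cases ha hgs))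
    have hhull : convexHull ℝ (S ∪ -S) ⊆ LinearMap.mulRight ℝ t ⁻¹' Q :=
      convexHull_min hbase (hQ.linear_preimage _)
    rw [Fin.prod_univ_succ]
    exact hhull (hfs 0)

theorem pow_mem_of_mem_closure_convexHull_union_neg {A : Type*} [CommRing A] [Algebra ℝ A]
    [TopologicalSpace A] [ContinuousMul A] {S : Set A} {m : ℕ} {Q : Set A} (hQ : Convex ℝ Q)
    (hQneg : ∀ a ∈ Q, -a ∈ Q) (hQc : IsClosed Q)
    (hS : ∀ fs : Fin m → A, (∀ i, fs i ∈ S) → ∏ i, fs i ∈ Q) {φ : A}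
    (hφ : φ ∈ closure (convexHull ℝ (S ∪ -S))) : φ ^ m ∈ Q := by
  refine closure_minimal (fun a ha => ?_) (hQc.preimage (continuous_pow m)) hφ
  simpa using prod_mem_of_forall_mem_convexHull_union_neg hQ hQneg hS (fun _ => a) fun _ => ha

theorem Seminorm.exists_pos_mul_norm_le {E : Type*} [NormedAddCommGroup E] [NormedSpace ℝ E]
    [FiniteDimensional ℝ E] (p : Seminorm ℝ E) (hp : ∀ x, p x = 0 → x = 0) :
    ∃ ε > 0, ∀ x, ε * ‖x‖ ≤ p x := by
  cases subsingleton_or_nontrivial E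
  · exact ⟨1, one_pos, fun x => by simp [Subsingleton.elim x 0]⟩
  have hcont : Continuous p := continuousOn_univ.mp (p.convexOn.continuousOn isOpen_univ)
  obtain ⟨x₀, hx₀, hmin⟩ := (isCompact_sphere (0 : E) 1).exists_isMinOn
    (NormedSpace.sphere_nonempty.mpr zero_le_one) hcont.continuousOn
  have hx₀ : ‖x₀‖ = 1 := by simpa using hx₀
  refine ⟨p x₀, (apply_nonneg p x₀).lt_of_ne' fun h => by simp [hp x₀ h] at hx₀, fun x => ?_⟩
  rcases eq_or_ne x 0 with rfl | hx
  · simp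
  have hx' : 0 < ‖x‖ := norm_pos_iff.mpr hx
  have hunit : ‖x‖⁻¹ • x ∈ Metric.sphere (0 : E) 1 := by
    simp [norm_smul, hx'.ne']
  calc p x₀ * ‖x‖ ≤ p (‖x‖⁻¹ • x) * ‖x‖ := by gcongr; exact hmin hunit
    _ = p x := by rw [map_smul_eq_mul, norm_inv, norm_norm]; field_simp

section Inner

variable {G : Type*} [Fintype G]

noncomputable def innBilin : (G → ℝ) →ₗ[ℝ] (G → ℝ) →ₗ[ℝ] ℝ :=
  (Fintype.card G : ℝ)⁻¹ • dotProductBilin ℝ ℝ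

@[simp]
theorem innBilin_apply (f g : G → ℝ) : innBilin f g = inn f g := by
  simp [innBilin, inn, dotProduct, div_eq_inv_mul]

theorem inn_comm (f g : G → ℝ) : inn f g = inn g f := by
  simp only [inn, mul_comm]

theorem abs_inn_le (f g : G → ℝ) : |inn f g| ≤ ‖f‖ * ‖g‖ := by
  rcases isEmpty_or_nonempty G with hG | hG
  · simp [inn]; positivity
  have hcard : (0 : ℝ) < Fintype.card G := by positivity
  rw [inn, abs_div, abs_of_pos hcard, div_le_iff₀ hcard]
  calc |∑ x, f x * g x| ≤ ∑ x, |f x| * |g x| := by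
        simpa only [abs_mul] using Finset.abs_sum_le_sum_abs (fun x => f x * g x) univ
    _ ≤ ∑ _x : G, ‖f‖ * ‖g‖ := by
        gcongr with x
        · exact norm_le_pi_norm f x
        · exact norm_le_pi_norm g x
    _ = ‖f‖ * ‖g‖ * Fintype.card G := by simp [mul_comm]

theorem inn_neg_left (f g : G → ℝ) : inn (-f) g = -inn f g := by
  simp [← innBilin_apply]

variable [Nonempty G]

theorem inn_self_eq_zero {f : G → ℝ} : inn f f = 0 ↔ f = 0 := by
  rw [inn, div_eq_zero_iff, or_iff_left (by positivity)]
  exact dotProduct_self_eq_zero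

theorem exists_inn_eq (ℓ : (G → ℝ) →ₗ[ℝ] ℝ) : ∃ h : G → ℝ, ∀ v, inn h v = ℓ v := by
  classical
  refine ⟨(Fintype.card G : ℝ) • (dotProductEquiv ℝ G).symm ℓ, fun v => ?_⟩
  have hcard : (Fintype.card G : ℝ) ≠ 0 := by positivity
  rw [inn, ← dotProduct, smul_dotProduct, smul_eq_mul, mul_div_cancel_left₀ _ hcard]
  exact LinearMap.congr_fun ((dotProductEquiv ℝ G).apply_symm_apply ℓ) v

end Inner

section Polar

variable {G : Type*} [Fintype G] [Nonempty G]

theorem exists_norm_le_of_span_eq_top {S : Set (G → ℝ)} (hS : Submodule.span ℝ S = ⊤) :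
    ∃ M, ∀ g : G → ℝ, (∀ v ∈ S, |inn g v| ≤ 1) → ‖g‖ ≤ M := by
  obtain ⟨b, hbS, hb, hbind⟩ := exists_linearIndependent ℝ S
  have : Fintype b := hbind.setFinite.fintype
  let T : (G → ℝ) →ₗ[ℝ] (b → ℝ) := LinearMap.pi fun v => innBilin.flip v
  have hker : LinearMap.ker T = ⊥ := by
    refine LinearMap.ker_eq_bot'.mpr fun g hg => inn_self_eq_zero.mp ?_
    have hspan : Submodule.span ℝ b ≤ LinearMap.ker (innBilin g) :=
      Submodule.span_le.mpr fun v hv => by simpa [T] using congr_fun hg ⟨v, hv⟩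
    rw [hb, hS] at hspan
    simpa using hspan (Submodule.mem_top (x := g))
  obtain ⟨K, -, hK⟩ := T.exists_antilipschitzWith hker
  refine ⟨K, fun g hg => (ZeroHomClass.bound_of_antilipschitz T hK g).trans ?_⟩
  have hTg : ‖T g‖ ≤ 1 := (pi_norm_le_iff_of_nonneg zero_le_one).mpr fun v => by
    simpa [T] using hg v (hbS v.2)
  simpa using mul_le_mul_of_nonneg_left hTg K.2

theorem mem_closure_convexHull_of_abs_inn_le {S : Set (G → ℝ)} (hS : S.Nonempty) {ψ : G → ℝ}
    (hψ : ∀ g, (∀ v ∈ S, |inn g v| ≤ 1) → |inn ψ g| ≤ 1) :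
    ψ ∈ closure (convexHull ℝ (S ∪ -S)) := by
  -- A functional separating `ψ` from the hull, rescaled by the separating level `u`, violates `hψ`.
  by_contra hψS
  obtain ⟨ℓ, u, hℓ, hu⟩ :=
    geometric_hahn_banach_closed_point (convex_convexHull ℝ _).closure isClosed_closure hψS
  have hℓS : ∀ v ∈ S, |ℓ v| < u := by
    intro v hv
    have hpos := hℓ v (subset_closure (subset_convexHull ℝ _ (Or.inl hv)))
    have hneg := hℓ (-v) (subset_closure (subset_convexHull ℝ _ (Or.inr (by simpa using hv))))
    rw [map_neg] at hneg
    exact abs_lt.mpr ⟨by linarith, hpos⟩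
  obtain ⟨v₀, hv₀⟩ := hS
  have hu0 : 0 < u := (abs_nonneg _).trans_lt (hℓS v₀ hv₀)
  obtain ⟨h, hh⟩ := exists_inn_eq (u⁻¹ • (ℓ : (G → ℝ) →ₗ[ℝ] ℝ))
  have hhS : ∀ v ∈ S, |inn h v| ≤ 1 := fun v hv => by
    simpa [hh, abs_mul, abs_of_pos hu0, inv_mul_le_iff₀ hu0] using (hℓS v hv).le
  have hhψ := hψ h hhS
  rw [inn_comm, hh] at hhψ
  simp only [LinearMap.smul_apply, ContinuousLinearMap.coe_coe, smul_eq_mul] at hhψ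
  have := (le_abs_self _).trans hhψ
  rw [inv_mul_le_iff₀ hu0] at this
  linarith

end Polar

section DualNorm

variable {G : Type*} [Fintype G]

theorem convex_setOf_forall_abs_inn_le (T : Set (G → ℝ)) (B : ℝ) :
    Convex ℝ {a : G → ℝ | ∀ g ∈ T, |inn a g| ≤ B} := by
  intro a ha b hb s t hs ht hst g hg
  simp only [← innBilin_apply, map_add, map_smul, LinearMap.add_apply, LinearMap.smul_apply,
    smul_eq_mul] at ha hb ⊢
  calc |s * innBilin a g + t * innBilin b g| ≤ s * |innBilin a g| + t * |innBilin b g| := by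
        simpa [abs_mul, abs_of_nonneg hs, abs_of_nonneg ht] using
          abs_add_le (s * innBilin a g) (t * innBilin b g)
    _ ≤ s * B + t * B := by gcongr <;> simp_all
    _ = B := by rw [← add_mul, hst, one_mul]

theorem isClosed_setOf_forall_abs_inn_le (T : Set (G → ℝ)) (B : ℝ) :
    IsClosed {a : G → ℝ | ∀ g ∈ T, |inn a g| ≤ B} := by
  simp only [Set.ofPred_forall]
  refine isClosed_iInter fun g => isClosed_iInter fun _ => isClosed_le ?_ continuous_const
  simpa using (innBilin.flip g).continuous_of_finiteDimensional.abs

theorem abs_inn_le_dualNormOf {nn : (G → ℝ) → ℝ} {M : ℝ} (hM : ∀ g, nn g ≤ 1 → ‖g‖ ≤ M)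
    (f : G → ℝ) {g : G → ℝ} (hg : nn g ≤ 1) : |inn f g| ≤ dualNormOf nn f := by
  refine le_csSup ⟨‖f‖ * M, ?_⟩ ⟨g, hg, rfl⟩
  rintro _ ⟨g', hg', rfl⟩
  exact (abs_inn_le f g').trans (mul_le_mul_of_nonneg_left (hM g' hg') (norm_nonneg f))

theorem dualNormOf_le {nn : (G → ℝ) → ℝ} {f : G → ℝ} {B : ℝ} (h0 : nn 0 ≤ 1)
    (hf : ∀ g, nn g ≤ 1 → |inn f g| ≤ B) : dualNormOf nn f ≤ B := by
  refine csSup_le ⟨_, 0, h0, rfl⟩ ?_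
  rintro _ ⟨g, hg, rfl⟩
  exact hf g hg

theorem IsNormOn.exists_norm_le {nn : (G → ℝ) → ℝ} (h : IsNormOn G nn) :
    ∃ M, ∀ g, nn g ≤ 1 → ‖g‖ ≤ M := by
  obtain ⟨-, hzero, hsmul, hadd⟩ := h
  obtain ⟨ε, hε, hp⟩ := (Seminorm.of nn hadd (by simpa using hsmul)).exists_pos_mul_norm_le
    fun g => (hzero g).mp
  exact ⟨ε⁻¹, fun g hg => by simpa using (le_inv_mul_iff₀ hε).mpr ((hp g).trans hg)⟩

theorem abs_inn_le_bacNorm {F : Set (G → ℝ)} {D : (G → ℝ) → (G → ℝ)}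
    (hD : Bornology.IsBounded (D '' F)) (g : G → ℝ) {f : G → ℝ} (hf : f ∈ F) :
    |inn g (D f)| ≤ bacNorm F D g := by
  obtain ⟨R, hR⟩ := hD.exists_norm_le
  refine le_csSup ⟨‖g‖ * R, ?_⟩ ⟨f, hf, rfl⟩
  rintro _ ⟨f', hf', rfl⟩
  exact (abs_inn_le _ _).trans (mul_le_mul_of_nonneg_left (hR _ ⟨f', hf', rfl⟩) (norm_nonneg g))

theorem bacNorm_le {F : Set (G → ℝ)} {D : (G → ℝ) → (G → ℝ)} {g : G → ℝ} {B : ℝ}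
    (hF : F.Nonempty) (hg : ∀ f ∈ F, |inn g (D f)| ≤ B) : bacNorm F D g ≤ B := by
  obtain ⟨f₀, hf₀⟩ := hF
  refine csSup_le ⟨_, f₀, hf₀, rfl⟩ ?_
  rintro _ ⟨f, hf, rfl⟩
  exact hg f hf

end DualNorm

namespace IsQuasiAlgebraPredual

variable {G : Type*} [Fintype G] {nn : (G → ℝ) → ℝ} {F : Set (G → ℝ)} {c : ℝ → ℝ} {C : ℕ → ℝ}
  {D : (G → ℝ) → (G → ℝ)}

theorem abs_inn_prod_le (h : IsQuasiAlgebraPredual G nn F c C D) {m : ℕ} (hm : 1 ≤ m)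
    {fs : Fin m → G → ℝ} (hfs : ∀ i, fs i ∈ D '' F) {g : G → ℝ} (hg : nn g ≤ 1) :
    |inn (∏ i, fs i) g| ≤ C m := by
  choose f hf hfD using hfs
  obtain ⟨M, hM⟩ := h.isNorm.exists_norm_le
  calc |inn (∏ i, fs i) g| = |inn (fun x => ∏ i, D (f i) x) g| := by simp [← hfD, Finset.prod_fn]
    _ ≤ dualNormOf nn (fun x => ∏ i, D (f i) x) := abs_inn_le_dualNormOf hM _ hg
    _ ≤ C m := h.dual_prod_le m hm f hf

variable [Nonempty G]

theorem nonempty (h : IsQuasiAlgebraPredual G nn F c C D) : F.Nonempty := by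
  rw [Set.nonempty_iff_ne_empty]
  rintro rfl
  simpa using h.spanD

theorem exists_norm_le_of_bacNorm_le_one (h : IsQuasiAlgebraPredual G nn F c C D) :
    ∃ M, ∀ g, bacNorm F D g ≤ 1 → ‖g‖ ≤ M := by
  obtain ⟨M, hM⟩ := exists_norm_le_of_span_eq_top h.spanD
  refine ⟨M, fun g hg => hM g ?_⟩
  rintro _ ⟨f, hf, rfl⟩
  exact (abs_inn_le_bacNorm h.compactD.isBounded g hf).trans hg

theorem mem_closure_convexHull (h : IsQuasiAlgebraPredual G nn F c C D) {ψ : G → ℝ}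
    (hψ : bacDualNorm F D ψ ≤ 1) : ψ ∈ closure (convexHull ℝ (D '' F ∪ -(D '' F))) := by
  obtain ⟨M, hM⟩ := h.exists_norm_le_of_bacNorm_le_one
  refine mem_closure_convexHull_of_abs_inn_le (h.nonempty.image D) fun g hg => ?_
  have hgbac : bacNorm F D g ≤ 1 := bacNorm_le h.nonempty fun f hf => hg _ ⟨f, hf, rfl⟩
  exact (abs_inn_le_dualNormOf hM ψ hgbac).trans hψ

end IsQuasiAlgebraPredual

/-- If `‖ψ‖_{BAC}^* ≤ 1` then the pointwise power `ψ^m` satisfies `‖ψ^m‖^* ≤ C(m)`. -/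
theorem dualNorm_pow_le (G : Type) [Fintype G] [Nonempty G]
    (nn : (G → ℝ) → ℝ) (F : Set (G → ℝ)) (c : ℝ → ℝ) (C : ℕ → ℝ)
    (D : (G → ℝ) → (G → ℝ))
    (h : IsQuasiAlgebraPredual G nn F c C D)
    (ψ : G → ℝ) (hψ : bacDualNorm F D ψ ≤ 1)
    (m : ℕ) (hm : 1 ≤ m) :
    dualNormOf nn (fun x => ψ x ^ m) ≤ C m := by
  have hψm : ψ ^ m ∈ {a : G → ℝ | ∀ g ∈ {g | nn g ≤ 1}, |inn a g| ≤ C m} :=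
    pow_mem_of_mem_closure_convexHull_union_neg (convex_setOf_forall_abs_inn_le _ _)
      (fun _ ha g hg => by simpa [inn_neg_left] using ha g hg)
      (isClosed_setOf_forall_abs_inn_le _ _)
      (fun _ hfs _ => h.abs_inn_prod_le hm hfs) (h.mem_closure_convexHull hψ)
  exact dualNormOf_le (((h.isNorm.2.1 0).mpr rfl).trans_le zero_le_one) hψm
end

section
/- For every monic irreducible polynomial P with deg P ≤ N summed over, one has Σ_{P monic irreducible, deg P ≤ N} 1/|P| = log N + O_q(1); that is, there is a constant C depending only on q such that |Σ_{P monic irreducible, deg P ≤ N} 1/|P| − log N| ≤ C for all N ≥ 1. -/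
/-!
Counting the elements of the degree `n` extension of `𝔽_q` according to their minimal
polynomials gives Gauss's identity `∑_{d ∣ n} d π(d) = q ^ n`, where `π(d)` is the number of
monic irreducibles of degree `d`. The proper divisors contribute at most `2 q ^ (n / 2)`, so
`π(n) / q ^ n = 1 / n + O((3/4) ^ n)`; the errors are summable and what remains is the harmonic
sum `H_N = log N + O(1)`.
-/

open Polynomial Finset

theorem Polynomial.card_filter_minpoly_eq {F K : Type*} [Field F] [Field K] [Algebra F K]
    [Fintype K] [DecidableEq F[X]] {P : F[X]} (hmon : P.Monic) (hirr : Irreducible P)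
    (hsep : P.Separable) (hsplit : (P.map (algebraMap F K)).Splits) :
    #{x : K | minpoly F x = P} = P.natDegree := by
  rw [← card_rootSet_eq_natDegree hsep hsplit, ← Set.toFinset_card]
  congr 1
  ext x
  simp only [mem_filter, mem_univ, true_and, Set.mem_toFinset, mem_rootSet_of_ne hirr.ne_zero]
  exact ⟨fun h => h ▸ minpoly.aeval F x, fun h =>
    (minpoly.eq_of_irreducible_of_monic hirr h hmon).symm⟩

namespace FiniteField

variable {F : Type*} [Field F] [Finite F] (p : ℕ) [Fact p.Prime] [CharP F p] (n : ℕ) [NeZero n]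

theorem splits_map_extension_of_natDegree_dvd {P : F[X]} (hirr : Irreducible P)
    (hdvd : P.natDegree ∣ n) : (P.map (algebraMap F (Extension F p n))).Splits := by
  -- Stated piecewise: elaborating `Splits.of_dvd` against the goal unfolds `Extension`.
  have hsplit := IsSplittingField.splits (Extension F p n) (X ^ Nat.card F ^ n - X : F[X])
  have hne := map_ne_zero (f := algebraMap F (Extension F p n))
    (X_pow_card_pow_sub_X_ne_zero F (NeZero.ne n) (Finite.one_lt_card (α := F)))
  have hdvd' := map_dvd (algebraMap F (Extension F p n))
    (hirr.natDegree_dvd_iff_dvd_X_pow_card_pow_sub_X.1 hdvd)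
  exact hsplit.of_dvd hne hdvd'

theorem natDegree_minpoly_dvd (x : Extension F p n) : (minpoly F x).natDegree ∣ n := by
  have h := minpoly.degree_dvd (.of_finite F x)
  rwa [finrank_extension] at h

end FiniteField

theorem FiniteField.sum_natDegree_eq_card_pow {F : Type*} [Field F] [Finite F] {n : ℕ}
    (hn : n ≠ 0) (T : Finset F[X])
    (hT : ∀ P, P ∈ T ↔ P.Monic ∧ Irreducible P ∧ P.natDegree ∣ n) :
    ∑ P ∈ T, P.natDegree = Nat.card F ^ n := by
  classical
  obtain ⟨p, _⟩ := CharP.exists F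
  have : Fact p.Prime := ⟨CharP.char_is_prime F p⟩
  have : NeZero n := ⟨hn⟩
  have := Fintype.ofFinite (Extension F p n)
  have hmaps (x : Extension F p n) : minpoly F x ∈ T :=
    (hT _).2 ⟨minpoly.monic (.of_finite F x), minpoly.irreducible (.of_finite F x),
      natDegree_minpoly_dvd p n x⟩
  rw [← natCard_extension F p n, Nat.card_eq_fintype_card, ← card_univ,
    card_eq_sum_card_fiberwise fun x _ => hmaps x]
  refine sum_congr rfl fun P hP => ?_
  obtain ⟨hmon, hirr, hdvd⟩ := (hT P).1 hP
  exact (card_filter_minpoly_eq hmon hirr (PerfectField.separable_of_irreducible hirr)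
    (splits_map_extension_of_natDegree_dvd p n hirr hdvd)).symm

theorem pow_div_two_le_mul_pow {q : ℝ} (hq : 2 ≤ q) (n : ℕ) :
    q ^ (n / 2) ≤ (3 / 4) ^ n * q ^ n := by
  have hsplit : q ^ n = q ^ (n / 2) * q ^ (n - n / 2) := by
    rw [← pow_add, Nat.add_sub_cancel' (Nat.div_le_self n 2)]
  have hgrowth : (4 / 3 : ℝ) ^ n ≤ q ^ (n - n / 2) :=
    calc (4 / 3 : ℝ) ^ n ≤ (4 / 3) ^ (2 * (n - n / 2)) :=
          pow_le_pow_right₀ (by norm_num) (by omega)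
      _ = (16 / 9) ^ (n - n / 2) := by rw [pow_mul]; norm_num
      _ ≤ q ^ (n - n / 2) := pow_le_pow_left₀ (by norm_num) (by linarith) _
  have hinv : (3 / 4 : ℝ) ^ n * (4 / 3) ^ n = 1 := by rw [← mul_pow]; norm_num
  rw [hsplit, mul_left_comm]
  refine le_mul_of_one_le_right (by positivity) ?_
  calc (1 : ℝ) = (3 / 4) ^ n * (4 / 3) ^ n := hinv.symm
    _ ≤ (3 / 4) ^ n * q ^ (n - n / 2) := by gcongr

theorem Nat.le_div_two_of_mem_properDivisors {d n : ℕ} (h : d ∈ n.properDivisors) :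
    d ≤ n / 2 := by
  rw [Nat.le_div_iff_mul_le two_pos]
  calc d * 2 ≤ d * (n / d) := Nat.mul_le_mul_left d (Nat.one_lt_div_of_mem_properDivisors h)
    _ ≤ n := Nat.mul_div_le n d

theorem Nat.geomSum_range_succ_le_two_mul {q : ℕ} (hq : 2 ≤ q) (m : ℕ) :
    ∑ i ∈ range (m + 1), q ^ i ≤ 2 * q ^ m := by
  rw [sum_range_succ, two_mul]
  exact Nat.add_le_add_right (Nat.geomSum_lt hq fun _ => mem_range.mp).le _

section GaussIdentity

variable {q : ℕ} {a : ℕ → ℕ}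

theorem mul_le_pow_of_sum_divisors_eq (ha : ∀ n ≠ 0, ∑ d ∈ n.divisors, d * a d = q ^ n)
    {n : ℕ} (hn : n ≠ 0) : n * a n ≤ q ^ n :=
  ha n hn ▸ single_le_sum (f := fun d => d * a d) (fun _ _ => Nat.zero_le _)
    (Nat.mem_divisors_self n hn)

theorem pow_le_mul_add_of_sum_divisors_eq (hq : 2 ≤ q)
    (ha : ∀ n ≠ 0, ∑ d ∈ n.divisors, d * a d = q ^ n) {n : ℕ} (hn : n ≠ 0) :
    q ^ n ≤ n * a n + 2 * q ^ (n / 2) := by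
  have hproper : ∑ d ∈ n.properDivisors, d * a d ≤ 2 * q ^ (n / 2) :=
    calc ∑ d ∈ n.properDivisors, d * a d
        ≤ ∑ d ∈ n.properDivisors, q ^ d := sum_le_sum fun d hd =>
          mul_le_pow_of_sum_divisors_eq ha (Nat.pos_of_mem_properDivisors hd).ne'
      _ ≤ ∑ d ∈ range (n / 2 + 1), q ^ d := sum_le_sum_of_subset fun d hd =>
          mem_range_succ_iff.mpr (Nat.le_div_two_of_mem_properDivisors hd)
      _ ≤ 2 * q ^ (n / 2) := Nat.geomSum_range_succ_le_two_mul hq _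
  rw [← ha n hn, ← Nat.cons_self_properDivisors hn, sum_cons]
  omega

theorem abs_div_pow_sub_inv_le_of_sum_divisors_eq (hq : 2 ≤ q)
    (ha : ∀ n ≠ 0, ∑ d ∈ n.divisors, d * a d = q ^ n) {n : ℕ} (hn : n ≠ 0) :
    |(a n : ℝ) / q ^ n - (n : ℝ)⁻¹| ≤ 2 * (3 / 4) ^ n := by
  have hq' : (2 : ℝ) ≤ q := by exact_mod_cast hq
  have hn' : (1 : ℝ) ≤ n := by exact_mod_cast Nat.one_le_iff_ne_zero.mpr hn
  have hupper : (n : ℝ) * a n ≤ (q : ℝ) ^ n := by exact_mod_cast mul_le_pow_of_sum_divisors_eq ha hn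
  have hlower : (q : ℝ) ^ n ≤ n * a n + 2 * (q : ℝ) ^ (n / 2) := by
    exact_mod_cast pow_le_mul_add_of_sum_divisors_eq hq ha hn
  have hdiff : |(n : ℝ) * a n - q ^ n| ≤ 2 * (q : ℝ) ^ (n / 2) :=
    abs_le.mpr ⟨by linarith, by linarith⟩
  have hqn : (0 : ℝ) < (q : ℝ) ^ n := by positivity
  calc |(a n : ℝ) / q ^ n - (n : ℝ)⁻¹| = |((n : ℝ) * a n - q ^ n) / (n * q ^ n)| := by
        congr 1
        field_simp
    _ = |(n : ℝ) * a n - q ^ n| / (n * q ^ n) := by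
        rw [abs_div, abs_of_pos (by positivity : (0 : ℝ) < n * q ^ n)]
    _ ≤ 2 * (q : ℝ) ^ (n / 2) / (1 * q ^ n) := by gcongr
    _ ≤ 2 * (3 / 4) ^ n := by
        rw [one_mul, div_le_iff₀ hqn, mul_assoc]
        gcongr
        exact pow_div_two_le_mul_pow hq' n

theorem abs_sum_div_pow_sub_log_le_of_sum_divisors_eq (hq : 2 ≤ q)
    (ha : ∀ n ≠ 0, ∑ d ∈ n.divisors, d * a d = q ^ n) {N : ℕ} (hN : N ≠ 0) :
    |∑ n ∈ Icc 1 N, (a n : ℝ) / q ^ n - Real.log N| ≤ 7 := by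
  have herror : |∑ n ∈ Icc 1 N, ((a n : ℝ) / q ^ n - (n : ℝ)⁻¹)| ≤ 6 :=
    calc |∑ n ∈ Icc 1 N, ((a n : ℝ) / q ^ n - (n : ℝ)⁻¹)|
        ≤ ∑ n ∈ Icc 1 N, 2 * (3 / 4 : ℝ) ^ n := (abs_sum_le_sum_abs _ _).trans <|
          sum_le_sum fun n hn => abs_div_pow_sub_inv_le_of_sum_divisors_eq hq ha
            (by rw [mem_Icc] at hn; omega)
      _ = 2 * ∑ n ∈ Ico 1 (N + 1), (3 / 4 : ℝ) ^ n := by rw [mul_sum]; rfl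
      _ ≤ 2 * ((3 / 4) ^ 1 / (1 - 3 / 4)) := by
          gcongr; exact geom_sum_Ico_le_of_lt_one (by norm_num) (by norm_num)
      _ = 6 := by norm_num
  have hharmonic : |∑ n ∈ Icc 1 N, (n : ℝ)⁻¹ - Real.log N| ≤ 1 := by
    have hlower := log_add_one_le_harmonic N
    have hupper := harmonic_le_one_add_log N
    simp only [harmonic_eq_sum_Icc, Rat.cast_sum, Rat.cast_inv, Rat.cast_natCast,
      Nat.cast_add_one] at hlower hupper
    have hmono : Real.log N ≤ Real.log (N + 1) :=
      Real.log_le_log (by positivity) (by linarith)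
    exact abs_le.mpr ⟨by linarith, by linarith⟩
  rw [sum_sub_distrib] at herror
  calc _ = |(∑ n ∈ Icc 1 N, (a n : ℝ) / q ^ n - ∑ n ∈ Icc 1 N, (n : ℝ)⁻¹) +
        (∑ n ∈ Icc 1 N, (n : ℝ)⁻¹ - Real.log N)| := by congr 1; ring
    _ ≤ 6 + 1 := (abs_add_le _ _).trans (add_le_add herror hharmonic)
    _ = 7 := by norm_num

end GaussIdentity

section MonicIrreducible

variable {F : Type*} [Field F]

theorem filter_natDegree_eq_of_le {S : ℕ → Finset F[X]}
    (hS : ∀ N p, p ∈ S N ↔ p.Monic ∧ Irreducible p ∧ p.natDegree ≤ N) {d M : ℕ} (h : d ≤ M) :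
    {p ∈ S M | p.natDegree = d} = {p ∈ S d | p.natDegree = d} := by
  ext p
  simp only [mem_filter, hS]
  constructor <;> rintro ⟨⟨hmon, hirr, -⟩, rfl⟩ <;> exact ⟨⟨hmon, hirr, by omega⟩, rfl⟩

theorem sum_comp_natDegree_eq {M : Type*} [AddCommMonoid M] {S : ℕ → Finset F[X]}
    (hS : ∀ N p, p ∈ S N ↔ p.Monic ∧ Irreducible p ∧ p.natDegree ≤ N) (f : ℕ → M) (N : ℕ) :
    ∑ p ∈ S N, f p.natDegree = ∑ d ∈ Icc 1 N, #{p ∈ S d | p.natDegree = d} • f d := by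
  have hmaps (p) (hp : p ∈ S N) : p.natDegree ∈ Icc 1 N := by
    obtain ⟨-, hirr, hle⟩ := (hS N p).1 hp
    exact mem_Icc.2 ⟨hirr.natDegree_pos, hle⟩
  rw [← sum_fiberwise_of_maps_to hmaps]
  refine sum_congr rfl fun d hd => ?_
  rw [sum_congr rfl fun p hp => congrArg f (mem_filter.1 hp).2, sum_const,
    filter_natDegree_eq_of_le hS (mem_Icc.1 hd).2]

theorem sum_divisors_mul_card_filter_natDegree_eq [Finite F] {S : ℕ → Finset F[X]}
    (hS : ∀ N p, p ∈ S N ↔ p.Monic ∧ Irreducible p ∧ p.natDegree ≤ N) {n : ℕ} (hn : n ≠ 0) :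
    ∑ d ∈ n.divisors, d * #{p ∈ S d | p.natDegree = d} = Nat.card F ^ n := by
  have hT (p : F[X]) : p ∈ {p ∈ S n | p.natDegree ∣ n} ↔
      p.Monic ∧ Irreducible p ∧ p.natDegree ∣ n := by
    simp only [mem_filter, hS]
    exact ⟨fun ⟨⟨hmon, hirr, _⟩, hdvd⟩ => ⟨hmon, hirr, hdvd⟩,
      fun ⟨hmon, hirr, hdvd⟩ => ⟨⟨hmon, hirr, Nat.le_of_dvd (by omega) hdvd⟩, hdvd⟩⟩
  have hmaps (p) (hp : p ∈ {p ∈ S n | p.natDegree ∣ n}) : p.natDegree ∈ n.divisors :=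
    Nat.mem_divisors.2 ⟨((hT p).1 hp).2.2, hn⟩
  rw [← FiniteField.sum_natDegree_eq_card_pow hn _ hT, ← sum_fiberwise_of_maps_to hmaps]
  refine sum_congr rfl fun d hd => ?_
  have hdvd := Nat.dvd_of_mem_divisors hd
  rw [sum_congr rfl fun p hp => (mem_filter.1 hp).2, sum_const, smul_eq_mul, mul_comm,
    filter_filter, filter_congr fun p _ => and_iff_right_of_imp fun h => h ▸ hdvd,
    filter_natDegree_eq_of_le hS (Nat.divisor_le hd)]

end MonicIrreducible

theorem sum_inv_norm_irreducible_general (q : ℕ) :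
    ∃ C : ℝ, ∀ (F : Type) [Field F] [Fintype F], Fintype.card F = q →
      ∀ S : ℕ → Finset (Polynomial F),
        (∀ N p, p ∈ S N ↔ p.Monic ∧ Irreducible p ∧ p.natDegree ≤ N) →
        ∀ N : ℕ, 1 ≤ N →
          |(∑ p ∈ S N, (1 : ℝ) / (q : ℝ) ^ p.natDegree) - Real.log N| ≤ C := by
  refine ⟨7, fun F _ _ hcard S hS N hN => ?_⟩
  have hq : 2 ≤ q := hcard ▸ Fintype.one_lt_card
  have hgauss (n : ℕ) (hn : n ≠ 0) :
      ∑ d ∈ n.divisors, d * #{p ∈ S d | p.natDegree = d} = q ^ n := by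
    rw [sum_divisors_mul_card_filter_natDegree_eq hS hn, Nat.card_eq_fintype_card, hcard]
  rw [sum_comp_natDegree_eq hS (fun d => (1 : ℝ) / (q : ℝ) ^ d)]
  simp only [nsmul_eq_mul, mul_one_div]
  exact abs_sum_div_pow_sub_log_le_of_sum_divisors_eq hq hgauss (by omega)

/-- **Mertens-type estimate for function fields.** The sum of `1/|P|` over monic
irreducible polynomials `P` of degree at most `N` equals `log N + O_q(1)`. -/
theorem sum_inv_norm_irreducible (q : ℕ) (hq : IsPrimePow q) :
    ∃ C : ℝ, ∀ (F : Type) [Field F] [Fintype F], Fintype.card F = q →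
      ∀ S : ℕ → Finset (Polynomial F),
        (∀ N p, p ∈ S N ↔ p.Monic ∧ Irreducible p ∧ p.natDegree ≤ N) →
        ∀ N : ℕ, 1 ≤ N →
          |(∑ p ∈ S N, (1 : ℝ) / (q : ℝ) ^ p.natDegree) - Real.log N| ≤ C :=
  sum_inv_norm_irreducible_general q
end

section
/- (Divisor bound) There is a constant C depending only on q such that every nonzero polynomial f ∈ 𝔽_q[t] of degree N ≥ 2 has at most q^{C·N/log N} monic divisors; equivalently, d(f) ≤ q^{O_q(N/log N)} where d(f) denotes the number of monic divisors of f. -/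
/-!
A monic divisor of `f` is determined by the sub-multiset of the normalized irreducible factors
of `f` it contains, so `d(f) ≤ ∏ (e_p + 1)` over the distinct factors `p` of multiplicity `e_p`.
Split the factors at degree `K`: there are at most `q^K` distinct ones of degree `< K`, each
contributing at most `N + 1`, and at most `a ≤ N / K` ones of degree `≥ K`, contributing at most
`2^a`. Choosing `q^(2K)` just above `N` gives
`log d(f) ≤ q √N · log (N + 1) + (2 N log q / log N) · log 2 = O_q(N / log N)`.
-/

open Polynomial UniqueFactorizationMonoid Real Finset

namespace Polynomial

theorem card_le_of_forall_natDegree_lt {R : Type*} [Semiring R] [Fintype R] {K : ℕ}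
    (S : Finset R[X]) (hS : ∀ p ∈ S, p.natDegree < K) : #S ≤ Fintype.card R ^ K := by
  have hinj : Set.InjOn (fun p : R[X] ↦ fun i : Fin K ↦ p.coeff i) S := by
    intro p hp p' hp' hpp'
    ext n
    by_cases hn : n < K
    · exact congrFun hpp' ⟨n, hn⟩
    · rw [coeff_eq_zero_of_natDegree_lt ((hS p hp).trans_le (not_lt.mp hn)),
        coeff_eq_zero_of_natDegree_lt ((hS p' hp').trans_le (not_lt.mp hn))]
  calc #S ≤ #(univ : Finset (Fin K → R)) :=
        card_le_card_of_injOn _ (fun _ _ ↦ mem_univ _) hinj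
    _ = Fintype.card R ^ K := by simp

variable {F : Type*} [Field F] [DecidableEq F]

theorem card_monic_dvd_le_card_Iic_normalizedFactors {f : F[X]} (hf : f ≠ 0) :
    Nat.card {d : F[X] // d.Monic ∧ d ∣ f} ≤ #(Iic (normalizedFactors f)) := by
  rw [← Nat.card_eq_finsetCard]
  refine Nat.card_le_card_of_injective (fun d ↦ ⟨normalizedFactors d.1, mem_Iic.mpr
    ((dvd_iff_normalizedFactors_le_normalizedFactors d.2.1.ne_zero hf).mp d.2.2)⟩) ?_
  intro d e hde
  have hassoc : Associated d.1 e.1 :=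
    (associated_iff_normalizedFactors_eq_normalizedFactors d.2.1.ne_zero e.2.1.ne_zero).mpr
      (congrArg Subtype.val hde)
  exact Subtype.ext (eq_of_monic_of_associated d.2.1 e.2.1 hassoc)

theorem sum_count_normalizedFactors_mul_natDegree {f : F[X]} (hf : f ≠ 0) :
    ∑ p ∈ (normalizedFactors f).toFinset, (normalizedFactors f).count p * p.natDegree =
      f.natDegree := by
  calc _ = ((normalizedFactors f).map natDegree).sum := (sum_multiset_map_count _ _).symm
    _ = (normalizedFactors f).prod.natDegree :=
        (natDegree_multiset_prod _ (zero_notMem_normalizedFactors f)).symm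
    _ = f.natDegree :=
        natDegree_eq_of_degree_eq (degree_eq_degree_of_associated (prod_normalizedFactors hf))

theorem exists_card_monic_dvd_le [Fintype F] {f : F[X]} (hf : f ≠ 0) (K : ℕ) :
    ∃ a, a * K ≤ f.natDegree ∧
      Nat.card {d : F[X] // d.Monic ∧ d ∣ f} ≤
        (f.natDegree + 1) ^ Fintype.card F ^ K * 2 ^ a := by
  set m := normalizedFactors f
  have hdeg : ∑ p ∈ m.toFinset, m.count p * p.natDegree = f.natDegree :=
    sum_count_normalizedFactors_mul_natDegree hf
  have hcount (p) (hp : p ∈ m.toFinset) : m.count p ≤ f.natDegree := by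
    have hpos := (irreducible_of_normalized_factor p (Multiset.mem_toFinset.mp hp)).natDegree_pos
    calc m.count p ≤ m.count p * p.natDegree := Nat.le_mul_of_pos_right _ hpos
      _ ≤ f.natDegree := hdeg ▸ single_le_sum (f := fun p ↦ m.count p * p.natDegree)
          (fun _ _ ↦ Nat.zero_le _) hp
  refine ⟨∑ p ∈ m.toFinset with K ≤ p.natDegree, m.count p, ?_, ?_⟩
  · calc (∑ p ∈ m.toFinset with K ≤ p.natDegree, m.count p) * K
        = ∑ p ∈ m.toFinset with K ≤ p.natDegree, m.count p * K := sum_mul _ _ _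
      _ ≤ ∑ p ∈ m.toFinset with K ≤ p.natDegree, m.count p * p.natDegree :=
          sum_le_sum fun p hp ↦ Nat.mul_le_mul_left _ (mem_filter.mp hp).2
      _ ≤ f.natDegree := hdeg ▸ sum_le_sum_of_subset (filter_subset _ _)
  rw [← prod_pow_eq_pow_sum]
  calc Nat.card {d : F[X] // d.Monic ∧ d ∣ f}
      ≤ #(Iic m) := card_monic_dvd_le_card_Iic_normalizedFactors hf
    _ = ∏ p ∈ m.toFinset, (m.count p + 1) := Multiset.card_Iic m
    _ = (∏ p ∈ m.toFinset with ¬K ≤ p.natDegree, (m.count p + 1)) *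
          ∏ p ∈ m.toFinset with K ≤ p.natDegree, (m.count p + 1) :=
        (prod_filter_not_mul_prod_filter _ _ _).symm
    _ ≤ (f.natDegree + 1) ^ Fintype.card F ^ K *
          ∏ p ∈ m.toFinset with K ≤ p.natDegree, 2 ^ m.count p := by
        gcongr with p hp
        · calc _ ≤ (f.natDegree + 1) ^ #{p ∈ m.toFinset | ¬K ≤ p.natDegree} :=
                prod_le_pow_card _ _ _ fun p hp ↦ Nat.succ_le_succ (hcount p (mem_filter.mp hp).1)
            _ ≤ _ := Nat.pow_le_pow_right (Nat.succ_pos _)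
                (card_le_of_forall_natDegree_lt _ fun p hp ↦ not_le.mp (mem_filter.mp hp).2)
        · exact Nat.lt_two_pow_self

end Polynomial

theorem exists_lt_pow_two_mul_le_sq_mul {q N : ℕ} (hq : 1 < q) (hN : N ≠ 0) :
    ∃ K, N < q ^ (2 * K) ∧ q ^ (2 * K) ≤ q ^ 2 * N := by
  refine ⟨Nat.log q N / 2 + 1, ?_, ?_⟩
  · calc N < q ^ (Nat.log q N + 1) := Nat.lt_pow_succ_log_self hq N
      _ ≤ q ^ (2 * (Nat.log q N / 2 + 1)) := Nat.pow_le_pow_right (by omega) (by omega)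
  · calc q ^ (2 * (Nat.log q N / 2 + 1)) = q ^ 2 * q ^ (2 * (Nat.log q N / 2)) := by ring
      _ ≤ q ^ 2 * q ^ Nat.log q N := by gcongr <;> omega
      _ ≤ q ^ 2 * N := by gcongr; exact Nat.pow_log_le_self q hN

theorem log_pow_four_le {x : ℝ} (hx : 1 ≤ x) : log x ^ 4 ≤ 24 * x := by
  have h := pow_div_factorial_le_exp _ (log_nonneg hx) 4
  rw [exp_log (by linarith)] at h
  norm_num [Nat.factorial] at h
  linarith

theorem mul_log_add_one_add_mul_log_two_le {q N x a : ℝ} (hq : 1 < q) (hN : 2 ≤ N) (hx : 0 ≤ x)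
    (hxN : x ^ 2 ≤ q ^ 2 * N) (haN : a * log N ≤ 2 * log q * N) :
    x * log (N + 1) + a * log 2 ≤ (10 * q / log q + 2) * N / log N * log q := by
  have hL : 0 < log N := log_pos (by linarith)
  have hlq : 0 < log q := log_pos hq
  have hlogN : log (N + 1) ≤ 2 * log N := by
    calc log (N + 1) ≤ log (N ^ 2) := log_le_log (by linarith) (by nlinarith)
      _ = 2 * log N := by rw [log_pow]; norm_num
  have hxL : x * log N ^ 2 ≤ 5 * q * N := by
    refine (pow_le_pow_iff_left₀ (by positivity) (by positivity) two_ne_zero).mp ?_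
    calc (x * log N ^ 2) ^ 2 = x ^ 2 * log N ^ 4 := by ring
      _ ≤ q ^ 2 * N * (24 * N) :=
          mul_le_mul hxN (log_pow_four_le (by linarith)) (by positivity) (by positivity)
      _ ≤ (5 * q * N) ^ 2 := by nlinarith [sq_nonneg (q * N)]
  have ha : a ≤ 2 * log q * N / log N := (le_div_iff₀ hL).mpr haN
  have hlog2 : log 2 ≤ 1 := by linarith [log_two_lt_d9]
  calc x * log (N + 1) + a * log 2
      ≤ 2 * (x * log N ^ 2) / log N + 2 * log q * N / log N := by
        gcongr
        · rw [mul_div_assoc, pow_two, ← mul_assoc, mul_div_cancel_right₀ _ hL.ne']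
          nlinarith
        · calc a * log 2 ≤ 2 * log q * N / log N * log 2 :=
                mul_le_mul_of_nonneg_right ha (log_nonneg one_le_two)
            _ ≤ _ := mul_le_of_le_one_right (by positivity) hlog2
    _ ≤ 2 * (5 * q * N) / log N + 2 * log q * N / log N := by gcongr
    _ = (10 * q / log q + 2) * N / log N * log q := by field_simp; ring

theorem cast_pow_mul_two_pow_le_rpow {q N K a : ℕ} (hq : 1 < q) (hN : 2 ≤ N)
    (hNK : N < q ^ (2 * K)) (hKN : q ^ (2 * K) ≤ q ^ 2 * N) (haK : a * K ≤ N) :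
    (((N + 1) ^ q ^ K * 2 ^ a : ℕ) : ℝ) ≤ (q : ℝ) ^ ((10 * q / log q + 2) * N / log N) := by
  have hq' : (1 : ℝ) < q := by exact_mod_cast hq
  rw [le_rpow_iff_log_le (by positivity) (by positivity)]
  push_cast
  rw [log_mul (by positivity) (by positivity), log_pow, log_pow]
  have hlogN : log N < 2 * K * log q := by
    rw [← log_rpow (by positivity)]
    exact log_lt_log (by positivity) (by exact_mod_cast hNK)
  refine mul_log_add_one_add_mul_log_two_le hq' (by exact_mod_cast hN) (by positivity) ?_ ?_
  · push_cast
    rw [← pow_mul, mul_comm]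
    exact_mod_cast hKN
  · calc (a : ℝ) * log N ≤ a * (2 * K * log q) := by gcongr
      _ = 2 * log q * (a * K : ℕ) := by push_cast; ring
      _ ≤ 2 * log q * N := by gcongr

theorem divisor_bound_function_fields_general (q : ℕ) :
    ∃ C : ℝ, 0 < C ∧ ∀ (F : Type) [Field F] [Fintype F], Fintype.card F = q →
      ∀ f : Polynomial F, f ≠ 0 → 2 ≤ f.natDegree →
        (Nat.card {d : Polynomial F // d.Monic ∧ d ∣ f} : ℝ) ≤
          (q : ℝ) ^ (C * (f.natDegree : ℝ) / Real.log (f.natDegree : ℝ)) := by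
  refine ⟨10 * q / log q + 2, by positivity, ?_⟩
  intro F _ _ hF f hf hN
  classical
  have hq : 1 < q := hF ▸ Fintype.one_lt_card
  obtain ⟨K, hNK, hKN⟩ := exists_lt_pow_two_mul_le_sq_mul hq (by omega : f.natDegree ≠ 0)
  obtain ⟨a, haK, hd⟩ := exists_card_monic_dvd_le hf K
  rw [hF] at hd
  exact (Nat.cast_le.mpr hd).trans (cast_pow_mul_two_pow_le_rpow hq hN hNK hKN haK)

/-- **Divisor bound for function fields.** There is a constant `C = C(q)` such that every
nonzero polynomial `f ∈ 𝔽_q[t]` of degree `N ≥ 2` has at most `q^{C·N/log N}` monic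
divisors. -/
theorem divisor_bound_function_fields (q : ℕ) (hq : IsPrimePow q) :
    ∃ C : ℝ, 0 < C ∧ ∀ (F : Type) [Field F] [Fintype F], Fintype.card F = q →
      ∀ f : Polynomial F, f ≠ 0 → 2 ≤ f.natDegree →
        (Nat.card {d : Polynomial F // d.Monic ∧ d ∣ f} : ℝ) ≤
          (q : ℝ) ^ (C * (f.natDegree : ℝ) / Real.log (f.natDegree : ℝ)) :=
  divisor_bound_function_fields_general q
end
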